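/- arXiv:1603.03138 — 5 statements merged into one kernel-verified Lean document; each statement's English description precedes it below -/
import Mathlib

section
/- Let (W,S) be a Coxeter group, let s and t be two distinct reflections of W with the order m of st finite, and let D_{s,t} be the subgroup of W generated by s and t. Then every entry of the word ρ_{s,t} = ((st)^0 s, (st)^1 s, …, (st)^{m-1} s) is a reflection of W lying in D_{s,t}, the entries are pairwise distinct, and every reflection of W lying in D_{s,t} occurs as an entry of ρ_{s,t}. -/
/-!
Two involutions `s, t` generate the dihedral group `{(st)^k, (st)^k s | k ∈ ℤ}`, because `s`
conjugates `st` to its inverse. Each `(st)^k s` is a reflection: it is `s` for `k = 0`, `sts` for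
`k = 1`, and `(st)^(k+2) s` is the conjugate of `(st)^k s` by `st`. No `(st)^k` is a reflection, since
reflections have odd length and `(st)^k` has even length. Finally `(st)^k s` only depends on `k`
modulo the order of `st`, and `n ↦ (st)^n s` is injective below that order.
-/

/-- The word `ρ_{s,t} = ((st)^0 s, (st)^1 s, …, (st)^{m-1} s)`. -/
def rhoWord {W : Type*} [Group W] (s t : W) (m : ℕ) : List W :=
  (List.range m).map (fun k => (s * t) ^ k * s)

section Dihedral

variable {G : Type*} [Group G] {s t : G}

theorem mem_rhoWord {x : G} {m : ℕ} : x ∈ rhoWord s t m ↔ ∃ n < m, (s * t) ^ n * s = x := by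
  simp [rhoWord]

theorem rhoWord_nodup (s t : G) : (rhoWord s t (orderOf (s * t))).Nodup :=
  List.nodup_range.map_on fun _ ha _ hb hab =>
    pow_injOn_Iio_orderOf (List.mem_range.1 ha) (List.mem_range.1 hb) (mul_right_cancel hab)

theorem zpow_mul_mem_rhoWord (hst : IsOfFinOrder (s * t)) (k : ℤ) :
    (s * t) ^ k * s ∈ rhoWord s t (orderOf (s * t)) := by
  obtain ⟨n, hn⟩ := hst.mem_powers_iff_mem_zpowers.2 (Subgroup.zpow_mem_zpowers (s * t) k)
  exact mem_rhoWord.2 ⟨n % orderOf (s * t), Nat.mod_lt _ hst.orderOf_pos,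
    by rw [pow_mod_orderOf]; exact congrArg (· * s) hn⟩

theorem pow_mul_mem_closure_pair (n : ℕ) : (s * t) ^ n * s ∈ Subgroup.closure {s, t} := by
  have hs : s ∈ Subgroup.closure {s, t} := Subgroup.subset_closure (by simp)
  have ht : t ∈ Subgroup.closure {s, t} := Subgroup.subset_closure (by simp)
  exact mul_mem (pow_mem (mul_mem hs ht) n) hs

theorem mul_zpow_mul_eq_zpow_neg_mul (hs : s * s = 1) (ht : t * t = 1) (k : ℤ) :
    s * (s * t) ^ k = (s * t) ^ (-k) * s := by
  have h_conj : SemiconjBy s (s * t) (s * t)⁻¹ := by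
    rw [SemiconjBy, mul_inv_rev, inv_eq_of_mul_eq_one_right hs, inv_eq_of_mul_eq_one_right ht,
      ← mul_assoc, hs, one_mul, mul_assoc, hs, mul_one]
  rw [h_conj.zpow_right k, inv_zpow']

theorem exists_zpow_of_mem_closure_pair (hs : s * s = 1) (ht : t * t = 1) {x : G}
    (hx : x ∈ Subgroup.closure {s, t}) : ∃ k : ℤ, x = (s * t) ^ k ∨ x = (s * t) ^ k * s := by
  have mul_s : ∀ y : G, (∃ k : ℤ, y = (s * t) ^ k ∨ y = (s * t) ^ k * s) →
      ∃ k : ℤ, s * y = (s * t) ^ k ∨ s * y = (s * t) ^ k * s := by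
    rintro y ⟨k, rfl | rfl⟩ <;> refine ⟨-k, ?_⟩
    · exact .inr (mul_zpow_mul_eq_zpow_neg_mul hs ht k)
    · rw [← mul_assoc, mul_zpow_mul_eq_zpow_neg_mul hs ht k, mul_assoc, hs, mul_one]
      exact .inl rfl
  have mul_t : ∀ y : G, (∃ k : ℤ, y = (s * t) ^ k ∨ y = (s * t) ^ k * s) →
      ∃ k : ℤ, t * y = (s * t) ^ k ∨ t * y = (s * t) ^ k * s := by
    intro y hy
    have t_mul : t * y = (s * t) ^ (-1 : ℤ) * (s * y) := by
      rw [← mul_assoc, zpow_neg_one, mul_inv_rev, inv_mul_cancel_right,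
        inv_eq_of_mul_eq_one_right ht]
    obtain ⟨k, hk | hk⟩ := mul_s y hy <;> refine ⟨-1 + k, ?_⟩ <;>
      simp only [t_mul, hk, ← mul_assoc, ← zpow_add, true_or, or_true]
  induction hx using Subgroup.closure_induction_left with
  | one => exact ⟨0, .inl (zpow_zero _).symm⟩
  | mul_left x hx y _ hy =>
    rcases hx with rfl | rfl
    exacts [mul_s y hy, mul_t y hy]
  | inv_mul_cancel x hx y _ hy =>
    rcases hx with rfl | rfl
    · rw [inv_eq_of_mul_eq_one_right hs]; exact mul_s y hy
    · rw [inv_eq_of_mul_eq_one_right ht]; exact mul_t y hy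

end Dihedral

namespace CoxeterSystem.IsReflection

variable {B W : Type*} [Group W] {M : CoxeterMatrix B} {cs : CoxeterSystem M W} {s t : W}

theorem lengthParity_eq (ht : cs.IsReflection t) :
    cs.lengthParity t = Multiplicative.ofAdd 1 := by
  rw [cs.lengthParity_eq_ofAdd_length, ZMod.natCast_eq_one_iff_odd.2 ht.odd_length]

theorem not_isReflection_zpow_mul (hs : cs.IsReflection s) (ht : cs.IsReflection t) (k : ℤ) :
    ¬ cs.IsReflection ((s * t) ^ k) := fun h => by
  have h_even : cs.lengthParity ((s * t) ^ k) = 1 := by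
    rw [map_zpow, map_mul, hs.lengthParity_eq, ht.lengthParity_eq, ← ofAdd_add,
      show (1 + 1 : ZMod 2) = 0 by decide, ofAdd_zero, one_zpow]
  rw [h.lengthParity_eq] at h_even
  exact absurd h_even (by decide)

theorem pow_mul (hs : cs.IsReflection s) (ht : cs.IsReflection t) :
    ∀ n : ℕ, cs.IsReflection ((s * t) ^ n * s)
  | 0 => by rwa [pow_zero, one_mul]
  | 1 => by simpa only [pow_one, hs.inv] using ht.conj s
  | n + 2 => by
    have h_conj : (s * t) ^ (n + 2) * s = (s * t) * ((s * t) ^ n * s) * (s * t)⁻¹ := by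
      rw [mul_inv_rev, hs.inv, ht.inv, pow_succ', pow_succ]
      simp only [mul_assoc]
    rw [h_conj]
    exact (hs.pow_mul ht n).conj (s * t)

end CoxeterSystem.IsReflection

theorem rho_lists_reflections_of_dihedral_general {B W : Type*} [Group W] {M : CoxeterMatrix B}
    (cs : CoxeterSystem M W) (s t : W)
    (hs : cs.IsReflection s) (ht : cs.IsReflection t)
    (hfin : IsOfFinOrder (s * t)) :
    (∀ x ∈ rhoWord s t (orderOf (s * t)),
        cs.IsReflection x ∧ x ∈ Subgroup.closure {s, t}) ∧
    (rhoWord s t (orderOf (s * t))).Nodup ∧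
    (∀ x : W, cs.IsReflection x → x ∈ Subgroup.closure {s, t} →
        x ∈ rhoWord s t (orderOf (s * t))) := by
  refine ⟨fun x hx => ?_, rhoWord_nodup s t, fun x hx hx_mem => ?_⟩
  · obtain ⟨n, -, rfl⟩ := mem_rhoWord.1 hx
    exact ⟨hs.pow_mul ht n, pow_mul_mem_closure_pair n⟩
  · obtain ⟨k, rfl | rfl⟩ := exists_zpow_of_mem_closure_pair hs.mul_self ht.mul_self hx_mem
    · exact absurd hx (hs.not_isReflection_zpow_mul ht k)
    · exact zpow_mul_mem_rhoWord hfin k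

/-- For distinct reflections `s, t` with `m = orderOf (s*t)` finite and
`D_{s,t}` the subgroup generated by `s` and `t`: every entry of `ρ_{s,t}` is a reflection
lying in `D_{s,t}`, the entries are pairwise distinct, and every reflection lying in
`D_{s,t}` occurs as an entry of `ρ_{s,t}`. -/
theorem rho_lists_reflections_of_dihedral {B W : Type*} [Group W] {M : CoxeterMatrix B}
    (cs : CoxeterSystem M W) (s t : W)
    (hs : cs.IsReflection s) (ht : cs.IsReflection t) (hst : s ≠ t)
    (hfin : IsOfFinOrder (s * t)) :
    (∀ x ∈ rhoWord s t (orderOf (s * t)),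
        cs.IsReflection x ∧ x ∈ Subgroup.closure {s, t}) ∧
    (rhoWord s t (orderOf (s * t))).Nodup ∧
    (∀ x : W, cs.IsReflection x → x ∈ Subgroup.closure {s, t} →
        x ∈ rhoWord s t (orderOf (s * t))) :=
  rho_lists_reflections_of_dihedral_general cs s t hs ht hfin
end

section
/- Let (W,S) be a Coxeter group. Let s, t ∈ S be distinct with m_{s,t} < ∞, let w ∈ W, and let the reduced expressions →a = (a_1,…,a_k) and →b = (b_1,…,b_k) for w be such that →b is obtained from →a by an (s,t)-braid move replacing the factor (a_{p+1},…,a_{p+m}) = (s,t,s,t,…) (m = m_{s,t} letters) by (t,s,t,s,…). Set q = a_1 a_2 ⋯ a_p. Then the inversion word Invs →b is obtained from Invs →a by replacing the factor (α_{p+1}, …, α_{p+m}) by its reversal, and moreover (α_{p+1}, …, α_{p+m}) = q ρ_{s,t} q⁻¹, where α_i denotes the i-th entry of Invs →a. -/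
/-- The word `(s, t, s, t, …)` with `m` letters. -/
def altList {α : Type*} (s t : α) (m : ℕ) : List α :=
  (List.range m).map (fun k => if k % 2 = 0 then s else t)

section GroupAux
variable {W : Type*} [Group W]

theorem shuffle (x y : W) (n : ℕ) : (x * y) ^ n * x = x * (y * x) ^ n := by
  induction n with
  | zero => simp
  | succ n ih =>
    rw [pow_succ', mul_assoc, ih, ← mul_assoc, mul_assoc x y x, mul_assoc, ← pow_succ']

variable {S T : W} (hS : S * S = 1) (hT : T * T = 1)

theorem inv_ST (hS : S * S = 1) (hT : T * T = 1) : (S * T)⁻¹ = T * S := by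
  rw [mul_inv_rev, inv_eq_of_mul_eq_one_right hS, inv_eq_of_mul_eq_one_right hT]

theorem keyE (hS : S * S = 1) (hT : T * T = 1) (n : ℕ) :
    S * ((S * T) ^ n)⁻¹ = (S * T) ^ n * S := by
  rw [← inv_pow, inv_ST hS hT, shuffle]

theorem conj_even (hS : S * S = 1) (hT : T * T = 1) (n : ℕ) :
    (S * T) ^ n * S * ((S * T) ^ n)⁻¹ = (S * T) ^ (n + n) * S := by
  rw [mul_assoc, keyE hS hT, ← mul_assoc, ← pow_add]

theorem conj_odd (hS : S * S = 1) (hT : T * T = 1) (n : ℕ) :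
    ((S * T) ^ n * S) * T * (((S * T) ^ n * S))⁻¹ = (S * T) ^ (n + n + 1) * S := by
  rw [mul_inv_rev, inv_eq_of_mul_eq_one_right hS]
  calc (S * T) ^ n * S * T * (S * ((S * T) ^ n)⁻¹)
      = (S * T) ^ n * (S * T) * ((S * T) ^ n * S) := by rw [keyE hS hT]; group
    _ = (S * T) ^ (n + n + 1) * S := by rw [show (S*T)^n * (S*T) * ((S*T)^n * S) = ((S*T)^n * (S*T) * (S*T)^n) * S by group,
          ← pow_succ, ← pow_add, Nat.add_right_comm]

theorem key2 (hS : S * S = 1) (hT : T * T = 1) {m : ℕ} (hm : (S * T) ^ m = 1) (h1 : 1 ≤ m) :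
    (S * T) ^ (m - 1) * S = T := by
  have : (S * T) ^ (m - 1) = (S * T)⁻¹ := by
    apply eq_inv_of_mul_eq_one_left
    rw [← pow_succ, Nat.sub_add_cancel h1, hm]
  rw [this, inv_ST hS hT, mul_assoc, hS, mul_one]

end GroupAux

theorem altList_succ {α : Type*} (s t : α) (m : ℕ) :
    altList s t (m + 1) = altList s t m ++ [if m % 2 = 0 then s else t] := by
  simp [altList, List.range_succ]

@[simp] theorem length_altList {α : Type*} (s t : α) (m : ℕ) :
    (altList s t m).length = m := by simp [altList]

theorem rhoWord_succ {W : Type*} [Group W] (s t : W) (m : ℕ) :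
    rhoWord s t (m + 1) = rhoWord s t m ++ [(s * t) ^ m * s] := by
  simp [rhoWord, List.range_succ]

@[simp] theorem length_rhoWord {W : Type*} [Group W] (s t : W) (m : ℕ) :
    (rhoWord s t m).length = m := by simp [rhoWord]

theorem rhoWord_reverse {W : Type*} [Group W] {S T : W} (hS : S * S = 1) (hT : T * T = 1)
    {m : ℕ} (hm : (S * T) ^ m = 1) :
    (rhoWord S T m).reverse = rhoWord T S m := by
  apply List.ext_getElem (by simp)
  intro k h1 h2
  have hk : k < m := by simpa using h2
  rw [List.getElem_reverse]
  simp only [rhoWord, List.getElem_map, List.getElem_range, List.length_map,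
    List.length_range]
  have hTS : (T * S) ^ k = ((S * T) ^ k)⁻¹ := by rw [← inv_pow, inv_ST hS hT]
  rw [hTS]
  rw [eq_comm, inv_mul_eq_iff_eq_mul, ← mul_assoc, ← pow_add, eq_comm]
  have : k + (m - 1 - k) = m - 1 := by omega
  rw [this]
  exact key2 hS hT hm (by omega)

namespace CoxeterSystem

variable {B W : Type*} [Group W] {M : CoxeterMatrix B} (cs : CoxeterSystem M W)

theorem leftInvSeq_append' (l l' : List B) :
    cs.leftInvSeq (l ++ l') = cs.leftInvSeq l ++ (cs.leftInvSeq l').map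
      (fun x => cs.wordProd l * x * (cs.wordProd l)⁻¹) := by
  induction l with
  | nil => simp
  | cons i l ih =>
    rw [List.cons_append]
    rw [show cs.leftInvSeq (i :: (l ++ l')) =
        cs.simple i :: (cs.leftInvSeq (l ++ l')).map (MulAut.conj (cs.simple i)) from rfl,
      show cs.leftInvSeq (i :: l) =
        cs.simple i :: (cs.leftInvSeq l).map (MulAut.conj (cs.simple i)) from rfl,
      ih, List.map_append, List.map_map, List.cons_append]
    congr 2
    ext x
    simp [wordProd_cons, mul_assoc, mul_inv_rev]

theorem wordProd_altList (i j : B) (m : ℕ) :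
    cs.wordProd (altList i j m) =
      (cs.simple i * cs.simple j) ^ (m / 2) * (cs.simple i) ^ (m % 2) := by
  induction m with
  | zero => simp [altList]
  | succ m ih =>
    rw [altList_succ, cs.wordProd_append, ih]
    rcases Nat.even_or_odd m with h | h
    · have h2 : m % 2 = 0 := Nat.even_iff.mp h
      have h3 : (m + 1) % 2 = 1 := by omega
      have h4 : (m + 1) / 2 = m / 2 := by omega
      simp [h2, h3, h4, mul_assoc]
    · have h2 : m % 2 = 1 := Nat.odd_iff.mp h
      have h3 : (m + 1) % 2 = 0 := by omega
      have h4 : (m + 1) / 2 = m / 2 + 1 := by omega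
      simp [h2, h3, h4, pow_succ, mul_assoc]

theorem leftInvSeq_altList (i j : B) (m : ℕ) :
    cs.leftInvSeq (altList i j m) = rhoWord (cs.simple i) (cs.simple j) m := by
  induction m with
  | zero => simp [altList, rhoWord]
  | succ m ih =>
    rw [altList_succ, ← List.concat_eq_append, cs.leftInvSeq_concat, ih, rhoWord_succ,
      List.concat_eq_append, cs.wordProd_altList]
    have hS := cs.simple_mul_simple_self i
    have hT := cs.simple_mul_simple_self j
    congr 1
    rcases Nat.even_or_odd m with h | h
    · have h2 : m % 2 = 0 := Nat.even_iff.mp h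
      rw [h2, if_pos rfl, pow_zero, mul_one, conj_even hS hT]
      have h3 : m / 2 + m / 2 = m := by omega
      rw [h3]
    · have h2 : m % 2 = 1 := Nat.odd_iff.mp h
      rw [h2, if_neg one_ne_zero, pow_one, conj_odd hS hT]
      have h3 : m / 2 + m / 2 + 1 = m := by omega
      rw [h3]

end CoxeterSystem

theorem altprod {W : Type*} [Group W] {S T : W} (hS : S * S = 1) (hT : T * T = 1)
    {m : ℕ} (hm : (S * T) ^ m = 1) :
    (T * S) ^ (m / 2) * T ^ (m % 2) = (S * T) ^ (m / 2) * S ^ (m % 2) := by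
  have hTS : (T * S) ^ (m / 2) = ((S * T) ^ (m / 2))⁻¹ := by rw [← inv_pow, inv_ST hS hT]
  rcases Nat.mod_two_eq_zero_or_one m with h2 | h2
  · simp only [h2, pow_zero, mul_one]
    rw [hTS]
    exact inv_eq_of_mul_eq_one_left (by rw [← pow_add, (by omega : m / 2 + m / 2 = m), hm])
  · rw [h2, pow_one, pow_one, hTS, inv_mul_eq_iff_eq_mul, ← mul_assoc, ← pow_add,
      (by omega : m / 2 + m / 2 = m - 1)]
    exact (key2 hS hT hm (by omega)).symm


/-- If the reduced expression `b` of `w` is obtained from the reduced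
expression `a` by an `(s,t)`-braid move replacing the factor `(s,t,s,t,…)` (of length
`m = m_{s,t}`) starting at position `p+1` by `(t,s,t,s,…)`, and `q = a_1 ⋯ a_p`, then
the inversion word of `b` is obtained from that of `a` by reversing the factor in
positions `p+1, …, p+m`, and this factor equals `q ρ_{s,t} q⁻¹`. -/
theorem invs_of_braid_move {B W : Type*} [Group W] {M : CoxeterMatrix B}
    (cs : CoxeterSystem M W) (w : W) (i j : B) (hij : i ≠ j) (hfin : M.M i j ≠ 0)
    (a b : List B)
    (ha : cs.IsReduced a) (haw : cs.wordProd a = w)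
    (hb : cs.IsReduced b) (hbw : cs.wordProd b = w)
    (p : ℕ) (hp : p + M.M i j ≤ a.length)
    (hafac : a = a.take p ++ altList i j (M.M i j) ++ a.drop (p + M.M i j))
    (hbdef : b = a.take p ++ altList j i (M.M i j) ++ a.drop (p + M.M i j)) :
    cs.leftInvSeq b =
      (cs.leftInvSeq a).take p ++ (((cs.leftInvSeq a).drop p).take (M.M i j)).reverse ++
        (cs.leftInvSeq a).drop (p + M.M i j) ∧
    ((cs.leftInvSeq a).drop p).take (M.M i j) =
      (rhoWord (cs.simple i) (cs.simple j) (M.M i j)).map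
        (fun x => cs.wordProd (a.take p) * x * (cs.wordProd (a.take p))⁻¹) := by
  set m := M.M i j with hmdef
  set X := a.take p with hX
  set Y := altList i j m with hY
  set Y' := altList j i m with hY'
  set Z := a.drop (p + m) with hZ
  have hS := cs.simple_mul_simple_self i
  have hT := cs.simple_mul_simple_self j
  have hpow : (cs.simple i * cs.simple j) ^ m = 1 := cs.simple_mul_simple_pow i j
  set f : W → W := fun x => cs.wordProd X * x * (cs.wordProd X)⁻¹ with hf
  set g : W → W := fun x => cs.wordProd (X ++ Y) * x * (cs.wordProd (X ++ Y))⁻¹ with hg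
  set A : List W := (rhoWord (cs.simple i) (cs.simple j) m).map f with hA
  set C : List W := (cs.leftInvSeq Z).map g with hC
  have hprodY : cs.wordProd Y' = cs.wordProd Y := by
    rw [hY, hY', cs.wordProd_altList, cs.wordProd_altList]
    exact altprod hS hT hpow
  have hlisY' : cs.leftInvSeq Y' = (rhoWord (cs.simple i) (cs.simple j) m).reverse := by
    rw [hY', cs.leftInvSeq_altList j i m, rhoWord_reverse hS hT hpow]
  have ha2 : cs.leftInvSeq a = (cs.leftInvSeq X ++ A) ++ C := by
    conv_lhs => rw [hafac]
    rw [cs.leftInvSeq_append' (X ++ Y) Z, cs.leftInvSeq_append' X Y,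
      cs.leftInvSeq_altList i j m]
  have hb2 : cs.leftInvSeq b = (cs.leftInvSeq X ++ A.reverse) ++ C := by
    conv_lhs => rw [hbdef]
    rw [cs.leftInvSeq_append' (X ++ Y') Z, cs.leftInvSeq_append' X Y', hlisY',
      List.map_reverse, hA]
    congr 2
    rw [hg, cs.wordProd_append, cs.wordProd_append, hprodY]
  have hlen1 : (cs.leftInvSeq X).length = p := by
    rw [cs.length_leftInvSeq, hX, List.length_take]
    omega
  have hlen2 : A.length = m := by simp [hA]
  have htake : (cs.leftInvSeq a).take p = cs.leftInvSeq X := by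
    rw [ha2, List.append_assoc, List.take_left' hlen1]
  have hdrop : (cs.leftInvSeq a).drop p = A ++ C := by
    rw [ha2, List.append_assoc, List.drop_left' hlen1]
  have hmid : ((cs.leftInvSeq a).drop p).take m = A := by
    rw [hdrop, List.take_left' hlen2]
  have hdrop2 : (cs.leftInvSeq a).drop (p + m) = C := by
    rw [ha2, List.drop_left' (by rw [List.length_append, hlen1, hlen2])]
  exact ⟨by rw [hb2, htake, hmid, hdrop2], hmid⟩
end

section
/- Let (W,S) be a Coxeter group. Let w ∈ W and let →a be a reduced expression for w. Let s, t be two distinct reflections of W with m_{s,t} < ∞. Then the word ρ_{s,t} appears as a subword of the inversion word Invs →a at most once. -/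
namespace List

variable {α β : Type*}

theorem eq_of_map_eq_of_injOn {f : α → β} {s : Set α} (hf : Set.InjOn f s) :
    ∀ {l₁ l₂ : List α}, (∀ a ∈ l₁, a ∈ s) → (∀ a ∈ l₂, a ∈ s) → l₁.map f = l₂.map f → l₁ = l₂
  | [], [], _, _, _ => rfl
  | a :: l₁, b :: l₂, h₁, h₂, h => by
    obtain ⟨hab, hl⟩ := cons.inj h
    rw [forall_mem_cons] at h₁ h₂
    exact congr_arg₂ cons (hf h₁.1 h₂.1 hab) (eq_of_map_eq_of_injOn hf h₁.2 h₂.2 hl)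

theorem Nodup.injOn_getD {l : List α} (hl : l.Nodup) (d : α) :
    Set.InjOn (l.getD · d) {n | n < l.length} := by
  intro i hi j hj hij
  rw [Set.mem_ofPred_eq] at hi hj
  simp only [getD_eq_getElem _ _ hi, getD_eq_getElem _ _ hj] at hij
  exact hl.getElem_inj_iff.mp hij

end List

theorem rho_subword_at_most_once_general {B W : Type*} [Group W] {M : CoxeterMatrix B}
    (cs : CoxeterSystem M W) (ω : List B)
    (hred : cs.IsReduced ω)
    (s t : W) :
    ∀ idx₁ idx₂ : List ℕ,
      idx₁.Pairwise (· < ·) → idx₂.Pairwise (· < ·) →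
      (∀ n ∈ idx₁, n < (cs.leftInvSeq ω).length) →
      (∀ n ∈ idx₂, n < (cs.leftInvSeq ω).length) →
      idx₁.map (fun n => (cs.leftInvSeq ω).getD n 1) = rhoWord s t (orderOf (s * t)) →
      idx₂.map (fun n => (cs.leftInvSeq ω).getD n 1) = rhoWord s t (orderOf (s * t)) →
      idx₁ = idx₂ := by
  intro idx₁ idx₂ _ _ h₁ h₂ hρ₁ hρ₂
  exact List.eq_of_map_eq_of_injOn (hred.nodup_leftInvSeq.injOn_getD 1) h₁ h₂ (hρ₁.trans hρ₂.symm)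

/-- For a reduced expression `ω` of `w` and distinct reflections `s, t`
with `orderOf (s*t)` finite, the word `ρ_{s,t}` appears as a subword of the inversion
word of `ω` at most once: any two strictly increasing position sequences realizing
`ρ_{s,t}` as a subword coincide. -/
theorem rho_subword_at_most_once {B W : Type*} [Group W] {M : CoxeterMatrix B}
    (cs : CoxeterSystem M W) (w : W) (ω : List B)
    (hred : cs.IsReduced ω) (hw : cs.wordProd ω = w)
    (s t : W) (hs : cs.IsReflection s) (ht : cs.IsReflection t) (hst : s ≠ t)
    (hfin : IsOfFinOrder (s * t)) :
    ∀ idx₁ idx₂ : List ℕ,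
      idx₁.Pairwise (· < ·) → idx₂.Pairwise (· < ·) →
      (∀ n ∈ idx₁, n < (cs.leftInvSeq ω).length) →
      (∀ n ∈ idx₂, n < (cs.leftInvSeq ω).length) →
      idx₁.map (fun n => (cs.leftInvSeq ω).getD n 1) = rhoWord s t (orderOf (s * t)) →
      idx₂.map (fun n => (cs.leftInvSeq ω).getD n 1) = rhoWord s t (orderOf (s * t)) →
      idx₁ = idx₂ :=
  rho_subword_at_most_once_general cs ω hred s t
end

section
/- Let (W,S) be a Coxeter group. Let w ∈ W and let →a be a reduced expression for w. Let s, t be two distinct reflections of W with m_{s,t} < ∞. Then the words ρ_{s,t} and ρ_{t,s} cannot both appear as subwords of the inversion word Invs →a. -/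
private lemma aux_pair_sublist {α : Type*} {a b : α} :
    ∀ {l : List α}, l.Nodup → List.Sublist [a,b] l → List.Sublist [b,a] l → a = b := by
  intro l
  induction l with
  | nil => intro _ h; simp at h
  | cons c l ih =>
    intro hnd h1 h2
    rcases List.cons_sublist_cons'.mp h1 with h1' | ⟨rfl, hb⟩
    · rcases List.cons_sublist_cons'.mp h2 with h2' | ⟨rfl, ha⟩
      · exact ih (List.nodup_cons.mp hnd).2 h1' h2'
      · exfalso
        have : b ∈ l := h1'.subset (by simp)
        exact (List.nodup_cons.mp hnd).1 this
    · rcases List.cons_sublist_cons'.mp h2 with h2' | ⟨rfl, ha⟩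
      · exfalso
        have : a ∈ l := h2'.subset (by simp)
        exact (List.nodup_cons.mp hnd).1 this
      · rfl

private lemma aux_pair_in_rho {W : Type*} [Group W] (s t : W) {m : ℕ} (hm : 2 ≤ m)
    (ht2 : t * t = 1) (hpow : (s * t) ^ m = 1) :
    List.Sublist [s,t] (rhoWord s t m) := by
  have h0 : List.Sublist ([0, m - 1] : List ℕ) (List.range m) := by
    obtain ⟨n, rfl⟩ : ∃ n, m = n + 1 := ⟨m - 1, by omega⟩
    rw [List.range_succ]
    have h00 : List.Sublist ([0] : List ℕ) (List.range n) := by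
      rw [List.singleton_sublist, List.mem_range]; omega
    simpa using h00.append (List.Sublist.refl [n])
  have := h0.map (fun k => (s * t) ^ k * s)
  have hlast : (s * t) ^ (m - 1) * s = t := by
    have : (s * t) ^ (m - 1) * (s * t) = 1 := by
      rw [← pow_succ]
      have : m - 1 + 1 = m := by omega
      rw [this, hpow]
    have h1 : (s * t) ^ (m - 1) * s = t⁻¹ := by
      rw [← mul_assoc] at this
      exact eq_inv_of_mul_eq_one_left this
    rw [h1, inv_eq_of_mul_eq_one_left ht2]
  simpa [rhoWord, hlast] using this

/-- For a reduced expression `ω` of `w` and distinct reflections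
`s, t` with `orderOf (s*t)` finite, the words `ρ_{s,t}` and `ρ_{t,s}` cannot both
appear as subwords of the inversion word of `ω`. -/
theorem rho_and_rho_op_not_both_subwords {B W : Type*} [Group W] {M : CoxeterMatrix B}
    (cs : CoxeterSystem M W) (w : W) (ω : List B)
    (hred : cs.IsReduced ω) (hw : cs.wordProd ω = w)
    (s t : W) (hs : cs.IsReflection s) (ht : cs.IsReflection t) (hst : s ≠ t)
    (hfin : IsOfFinOrder (s * t)) :
    ¬ (List.Sublist (rhoWord s t (orderOf (s * t))) (cs.leftInvSeq ω) ∧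
       List.Sublist (rhoWord t s (orderOf (t * s))) (cs.leftInvSeq ω)) := by
  rintro ⟨h1, h2⟩
  have hts : t * s = (s * t)⁻¹ := by
    rw [mul_inv_rev, hs.inv, ht.inv]
  have hm2 : 2 ≤ orderOf (s * t) := by
    have h0 : orderOf (s * t) ≠ 0 := (orderOf_pos_iff.mpr hfin).ne'
    have h1 : orderOf (s * t) ≠ 1 := by
      intro h
      have := orderOf_eq_one_iff.mp h
      apply hst
      calc s = s * (s * t) := by rw [this, mul_one]
        _ = t := by rw [← mul_assoc, hs.mul_self, one_mul]
    omega
  have hmeq : orderOf (t * s) = orderOf (s * t) := by rw [hts, orderOf_inv]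
  have hsub1 : List.Sublist [s,t] (cs.leftInvSeq ω) :=
    (aux_pair_in_rho s t hm2 ht.mul_self (pow_orderOf_eq_one _)).trans h1
  have hsub2 : List.Sublist [t,s] (cs.leftInvSeq ω) := by
    refine (aux_pair_in_rho t s ?_ hs.mul_self ?_).trans h2
    · omega
    · rw [pow_orderOf_eq_one]
  exact hst (aux_pair_sublist hred.nodup_leftInvSeq hsub1 hsub2)
end

section
/- Let (W,S) be a Coxeter group with Coxeter matrix (m_{s,s'}). Let s, t ∈ S be distinct with m_{s,t} < ∞, let u, v be distinct reflections of W with (u,v) conjugate (componentwise, by a single element of W) to a pair of distinct elements of S with finite Coxeter matrix entry, and let q ∈ W. Assume u ∈ q D_{s,t} q⁻¹ and v ∈ q D_{s,t} q⁻¹, where D_{s,t} is the subgroup generated by s and t. Then the order of uv equals m_{s,t}. -/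
/-!
Write `u = x s' x⁻¹` and `v = x t' x⁻¹` with `s', t'` simple. Among all `y` conjugating both
`s'` and `t'` into `D = ⟨s, t⟩` (`q⁻¹ x` is one), take one of minimal length. Then `y` is of
minimal length in its coset `D y`, so by Deodhar's lemma `ℓ(d y) = ℓ(d) + ℓ(y)` for `d ∈ D`;
also `ℓ(y s') > ℓ(y)`. Hence `ℓ(y s' y⁻¹) = ℓ(y s') - ℓ(y) = 1`, so `y s' y⁻¹` and likewise
`y t' y⁻¹` are simple reflections lying in `D`, i.e. they are `s` and `t`. So `uv` is conjugate
to `st` or `ts`, of order `m_{s,t}`.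

Deodhar's lemma rests on the exchange condition, which comes from Tits' action of `W` on
`T × {±1}`; the order of `st` is read off the geometric representation, where `s t` acts on the
plane spanned by `α_s, α_t` as a rotation by `2π / m_{s,t}`.
-/

open Finsupp Polynomial.Chebyshev Real

lemma Real.sin_pi_div_natCast_pos {m : ℕ} (hm : 2 ≤ m) : 0 < sin (π / m) :=
  sin_pos_of_pos_of_lt_pi (by positivity) (div_lt_self pi_pos (by exact_mod_cast hm))

namespace Polynomial.Chebyshev

lemma U_two_mul_add_eval_cos_pi_div {m : ℕ} (hm : 2 ≤ m) (n : ℤ) :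
    (U ℝ (2 * m + n)).eval (cos (π / m)) = (U ℝ n).eval (cos (π / m)) := by
  refine mul_right_cancel₀ (sin_pi_div_natCast_pos hm).ne' ?_
  have : (m : ℝ) ≠ 0 := by positivity
  rw [U_real_cos, U_real_cos, ← sin_add_two_pi ((n + 1) * _)]
  congr 1
  push_cast
  field_simp
  ring

end Polynomial.Chebyshev

namespace CoxeterMatrix

variable {B : Type*} (M : CoxeterMatrix B)

-- `gram b c = B(α_b, α_c)` for the Tits bilinear form, and `coroot b v = 2 B(v, α_b)`.
noncomputable def gram (b c : B) : ℝ :=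
  if M b c = 0 then -1 else -cos (π / M b c)

lemma gram_self (b : B) : M.gram b b = 1 := by
  simp [gram]

lemma gram_comm (b c : B) : M.gram b c = M.gram c b := by
  simp [gram, M.symmetric b c]

noncomputable def coroot (b : B) : (B →₀ ℝ) →ₗ[ℝ] ℝ :=
  linearCombination ℝ fun c => 2 * M.gram c b

noncomputable def geomReflection (b : B) : Module.End ℝ (B →₀ ℝ) :=
  LinearMap.id - (M.coroot b).smulRight (single b 1)

lemma geomReflection_apply (b : B) (v : B →₀ ℝ) :
    M.geomReflection b v = v - M.coroot b v • single b 1 := rfl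

lemma geomReflection_apply_of_coroot_eq_zero {b : B} {v : B →₀ ℝ} (h : M.coroot b v = 0) :
    M.geomReflection b v = v := by
  simp [geomReflection_apply, h]

lemma coroot_fst_apply_plane (b c : B) (x y : ℝ) :
    M.coroot b (x • single b 1 + y • single c 1) = 2 * x + 2 * M.gram b c * y := by
  simp only [coroot, smul_single, smul_eq_mul, mul_one, map_add, linearCombination_single,
    gram_self, gram_comm M c b]
  ring

lemma coroot_snd_apply_plane (b c : B) (x y : ℝ) :
    M.coroot c (x • single b 1 + y • single c 1) = 2 * M.gram b c * x + 2 * y := by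
  rw [add_comm, coroot_fst_apply_plane, gram_comm]
  ring

lemma geomReflection_mul_self (b : B) : M.geomReflection b * M.geomReflection b = 1 := by
  refine LinearMap.ext fun v => ?_
  have h : M.coroot b (single b 1) = 2 := by simp [coroot, gram_self]
  simp only [Module.End.mul_apply, geomReflection_apply, map_sub, map_smul, h,
    Module.End.one_apply]
  module

lemma geomReflection_fst_apply_plane (b c : B) (x y : ℝ) :
    M.geomReflection b (x • single b 1 + y • single c 1) =
      (-x + 2 * -M.gram b c * y) • single b 1 + y • single c 1 := by
  rw [geomReflection_apply, coroot_fst_apply_plane]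
  module

lemma geomReflection_snd_apply_plane (b c : B) (x y : ℝ) :
    M.geomReflection c (x • single b 1 + y • single c 1) =
      x • single b 1 + (2 * -M.gram b c * x - y) • single c 1 := by
  rw [geomReflection_apply, coroot_snd_apply_plane]
  module

lemma pow_geomReflection_mul_apply_plane (b c : B) (k : ℕ) (x y : ℝ) :
    ((M.geomReflection b * M.geomReflection c) ^ k) (x • single b 1 + y • single c 1) =
      ((U ℝ (2 * k)).eval (-M.gram b c) * x - (U ℝ (2 * k - 1)).eval (-M.gram b c) * y) •
          single b 1 +
        ((U ℝ (2 * k - 1)).eval (-M.gram b c) * x - (U ℝ (2 * k - 2)).eval (-M.gram b c) * y) •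
          single c 1 := by
  induction k with
  | zero => simp
  | succ k ih =>
    have h₀ := congrArg (Polynomial.eval (-M.gram b c)) (U_eq ℝ (2 * k))
    have h₁ := congrArg (Polynomial.eval (-M.gram b c)) (U_add_one ℝ (2 * k))
    have h₂ := congrArg (Polynomial.eval (-M.gram b c)) (U_add_two ℝ (2 * k))
    simp only [Polynomial.eval_sub, Polynomial.eval_mul, Polynomial.eval_X,
      Polynomial.eval_ofNat] at h₀ h₁ h₂
    rw [pow_succ', Module.End.mul_apply, ih, Module.End.mul_apply,
      geomReflection_snd_apply_plane, geomReflection_fst_apply_plane]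
    simp only [Nat.cast_succ, mul_add, mul_one, add_sub_cancel_right,
      show ∀ n : ℤ, n + 2 - 1 = n + 1 from fun n => by ring]
    congr 2
    · linear_combination -x * h₂ + y * h₁ + 2 * -M.gram b c * (-x * h₁ + y * h₀)
    · linear_combination -x * h₁ + y * h₀

lemma pow_geomReflection_mul_apply_of_coroot_eq_zero {b c : B} {v : B →₀ ℝ}
    (hb : M.coroot b v = 0) (hc : M.coroot c v = 0) (k : ℕ) :
    ((M.geomReflection b * M.geomReflection c) ^ k) v = v := by
  rw [Module.End.pow_apply]
  refine Function.iterate_fixed ?_ k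
  rw [Module.End.mul_apply, M.geomReflection_apply_of_coroot_eq_zero hc,
    M.geomReflection_apply_of_coroot_eq_zero hb]

lemma neg_gram_of_ne_zero {b c : B} (hm : M b c ≠ 0) : -M.gram b c = cos (π / M b c) := by
  simp [gram, hm]

lemma pow_geomReflection_mul_eq_one {b c : B} (hbc : b ≠ c) (hm : M b c ≠ 0) :
    (M.geomReflection b * M.geomReflection c) ^ M b c = 1 := by
  have h2 : 2 ≤ M b c := by have := M.off_diagonal b c hbc; omega
  have hU := U_two_mul_add_eval_cos_pi_div h2
  have e₀ : (U ℝ (2 * M b c)).eval (-M.gram b c) = 1 := by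
    simpa [M.neg_gram_of_ne_zero hm] using hU 0
  have e₁ : (U ℝ (2 * M b c - 1)).eval (-M.gram b c) = 0 := by
    simpa [M.neg_gram_of_ne_zero hm, ← sub_eq_add_neg] using hU (-1)
  have e₂ : (U ℝ (2 * M b c - 2)).eval (-M.gram b c) = -1 := by
    simpa [M.neg_gram_of_ne_zero hm, ← sub_eq_add_neg] using hU (-2)
  have hdet : 1 - M.gram b c ^ 2 ≠ 0 := by
    rw [← neg_sq, M.neg_gram_of_ne_zero hm, ← sin_sq]
    exact pow_ne_zero 2 (sin_pi_div_natCast_pos h2).ne'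
  refine LinearMap.ext fun v => ?_
  -- split `v` into its component in the plane of `b, c` and a part fixed by both reflections
  set x := (M.coroot b v - M.gram b c * M.coroot c v) / (2 * (1 - M.gram b c ^ 2)) with hx
  set y := (M.coroot c v - M.gram b c * M.coroot b v) / (2 * (1 - M.gram b c ^ 2)) with hy
  have hb : M.coroot b (v - (x • single b 1 + y • single c 1)) = 0 := by
    rw [map_sub, coroot_fst_apply_plane, hx, hy]
    field_simp
    ring
  have hc : M.coroot c (v - (x • single b 1 + y • single c 1)) = 0 := by
    rw [map_sub, coroot_snd_apply_plane, hx, hy]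
    field_simp
    ring
  conv_lhs => rw [← add_sub_cancel (x • single b 1 + y • single c 1) v]
  rw [map_add, pow_geomReflection_mul_apply_plane,
    M.pow_geomReflection_mul_apply_of_coroot_eq_zero hb hc, e₀, e₁, e₂, Module.End.one_apply]
  module

lemma isLiftable_geomReflection : M.IsLiftable M.geomReflection := by
  intro b c
  rcases eq_or_ne b c with rfl | hbc
  · rw [M.diagonal, pow_one, geomReflection_mul_self]
  rcases eq_or_ne (M b c) 0 with hm | hm
  · rw [hm, pow_zero]
  · exact M.pow_geomReflection_mul_eq_one hbc hm

lemma dvd_of_pow_geomReflection_mul_eq_one {b c : B} {n : ℕ}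
    (h : (M.geomReflection b * M.geomReflection c) ^ n = 1) : M b c ∣ n := by
  rcases eq_or_ne b c with rfl | hbc
  · rw [M.diagonal]
    exact one_dvd n
  -- read off the coefficients of `α_b` and `α_c` in `(σ_b σ_c)^n α_b = α_b`
  have hplane := M.pow_geomReflection_mul_apply_plane b c n 1 0
  simp only [one_smul, zero_smul, add_zero, mul_one, mul_zero, sub_zero, h,
    Module.End.one_apply] at hplane
  have hb := congrArg (· b) hplane
  have hc := congrArg (· c) hplane
  simp only [single_eq_same, smul_single, smul_eq_mul, mul_one, coe_add, Pi.add_apply, ne_eq,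
    hbc, hbc.symm, not_false_eq_true, single_eq_of_ne, add_zero, zero_add] at hb hc
  rcases eq_or_ne (M b c) 0 with hm | hm
  · have : -M.gram b c = 1 := by simp [gram, hm]
    rw [this, U_eval_one] at hc
    push_cast at hc
    have : n = 0 := by exact_mod_cast (by linarith : (n : ℝ) = 0)
    simp [this]
  have h2 : 2 ≤ M b c := by have := M.off_diagonal b c hbc; omega
  rw [M.neg_gram_of_ne_zero hm] at hb hc
  set θ := π / M b c with hθ
  have hsin₀ : sin (2 * n * θ) = 0 := by
    simpa [← hc] using (U_real_cos θ (2 * n - 1)).symm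
  have hsin₁ : sin (2 * n * θ + θ) = sin θ := by
    simpa [← hb, add_mul] using (U_real_cos θ (2 * n)).symm
  have hcos : cos (2 * n * θ) = 1 := by
    rw [sin_add, hsin₀, zero_mul, zero_add] at hsin₁
    exact mul_right_cancel₀ (sin_pi_div_natCast_pos h2).ne' (hsin₁.trans (one_mul _).symm)
  obtain ⟨k, hk⟩ := (cos_eq_one_iff _).1 hcos
  have : (M b c : ℝ) ≠ 0 := by exact_mod_cast hm
  rw [hθ] at hk
  field_simp at hk
  exact Int.natCast_dvd_natCast.mp ⟨k, by exact_mod_cast (by linarith : (n : ℝ) = M b c * k)⟩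

end CoxeterMatrix

namespace CoxeterSystem

open List

variable {B W : Type*} [Group W] {M : CoxeterMatrix B} (cs : CoxeterSystem M W)

local prefix:100 "s" => cs.simple
local prefix:100 "π" => cs.wordProd
local prefix:100 "ℓ" => cs.length

noncomputable def geometricRepresentation : W →* Module.End ℝ (B →₀ ℝ) :=
  cs.lift ⟨M.geomReflection, M.isLiftable_geomReflection⟩

@[simp]
lemma geometricRepresentation_simple (b : B) :
    cs.geometricRepresentation (cs.simple b) = M.geomReflection b :=
  cs.lift_apply_simple M.isLiftable_geomReflection b

theorem orderOf_simple_mul_simple (b c : B) : orderOf (cs.simple b * cs.simple c) = M b c := by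
  refine Nat.dvd_antisymm (orderOf_dvd_of_pow_eq_one (cs.simple_mul_simple_pow b c)) ?_
  refine M.dvd_of_pow_geomReflection_mul_eq_one ?_
  have h := congrArg cs.geometricRepresentation (pow_orderOf_eq_one (cs.simple b * cs.simple c))
  rwa [map_pow, map_mul, map_one, geometricRepresentation_simple,
    geometricRepresentation_simple] at h

section SignRepresentation

open scoped Classical

-- Tits' action of `s i` on `T × {±1}`, with `W` in place of the set `T` of reflections.
noncomputable def signPerm (i : B) : Equiv.Perm (W × ℤˣ) :=
  Function.Involutive.toPerm (fun p => (s i * p.1 * s i, if p.1 = s i then -p.2 else p.2)) <| by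
    rintro ⟨w, ε⟩
    by_cases h : w = s i
    · simp [h]
    · simp [h, mul_assoc, mul_eq_one_iff_eq_inv]

lemma signPerm_apply (i : B) (w : W) (ε : ℤˣ) :
    cs.signPerm i (w, ε) = (s i * w * s i, if w = s i then -ε else ε) := rfl

lemma pow_signPerm_mul_apply (i j : B) (n : ℕ) (w : W) (ε : ℤˣ) :
    ((cs.signPerm i * cs.signPerm j) ^ n) (w, ε) =
      ((s i * s j) ^ n * w * ((s i * s j) ^ n)⁻¹,
        (∏ k ∈ Finset.range (2 * n), if w = (s j * s i) ^ k * s j then -1 else 1) * ε) := by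
  induction n with
  | zero => simp
  | succ n ih =>
    have hinv : ((s i * s j) ^ n)⁻¹ = (s j * s i) ^ n := by
      rw [← inv_pow, mul_inv_rev, inv_simple, inv_simple]
    have hconj (g x : W) : g * w * g⁻¹ = x ↔ w = g⁻¹ * x * g := by
      constructor <;> rintro rfl <;> group
    have h₁ : (s i * s j) ^ n * w * ((s i * s j) ^ n)⁻¹ = s j ↔
        w = (s j * s i) ^ (2 * n) * s j := by
      rw [hconj, hinv, mul_assoc, ← mul_pow_mul, ← mul_assoc, ← pow_add, ← two_mul]
    have h₂ : s j * ((s i * s j) ^ n * w * ((s i * s j) ^ n)⁻¹) * s j = s i ↔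
        w = (s j * s i) ^ (2 * n + 1) * s j := by
      rw [show s j * ((s i * s j) ^ n * w * ((s i * s j) ^ n)⁻¹) * s j =
          (s j * (s i * s j) ^ n) * w * (s j * (s i * s j) ^ n)⁻¹ by simp [mul_assoc],
        hconj, mul_inv_rev, hinv, inv_simple, ← mul_pow_mul,
        show 2 * n + 1 = n + 1 + n by ring, pow_add, pow_succ]
      simp only [mul_assoc]
    rw [pow_succ', Equiv.Perm.mul_apply, ih, Equiv.Perm.mul_apply, signPerm_apply,
      signPerm_apply, Prod.mk.injEq]
    constructor
    · simp [pow_succ', hinv, mul_assoc]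
    · rw [if_congr h₁ rfl rfl, if_congr h₂ rfl rfl, show 2 * (n + 1) = 2 * n + 1 + 1 by ring,
        Finset.prod_range_succ, Finset.prod_range_succ]
      split_ifs <;> simp [mul_comm]

lemma isLiftable_signPerm : M.IsLiftable cs.signPerm := by
  intro i j
  refine Equiv.ext fun ⟨w, ε⟩ => ?_
  -- the `k`-th factor is `M i j`-periodic in `k`, so the product of `2 * M i j` factors is a square
  have hper (k : ℕ) : (s j * s i) ^ (M i j + k) = (s j * s i) ^ k := by
    rw [pow_add, cs.simple_mul_simple_pow', one_mul]
  rw [pow_signPerm_mul_apply, cs.simple_mul_simple_pow, two_mul, Finset.prod_range_add]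
  simp [hper, Int.units_mul_self]

noncomputable def signRepresentation : W →* Equiv.Perm (W × ℤˣ) :=
  cs.lift ⟨cs.signPerm, cs.isLiftable_signPerm⟩

lemma signRepresentation_wordProd (ω : List B) (t : W) (ε : ℤˣ) :
    cs.signRepresentation (π ω) (t, ε) =
      (π ω * t * (π ω)⁻¹, (-1) ^ (cs.rightInvSeq ω).count t * ε) := by
  induction ω with
  | nil => simp
  | cons i ω ih =>
    have h (x : W) : π ω * t * (π ω)⁻¹ = x ↔ (π ω)⁻¹ * x * π ω = t := by
      constructor <;> rintro rfl <;> group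
    rw [wordProd_cons, map_mul, Equiv.Perm.mul_apply, ih, signRepresentation,
      lift_apply_simple, signPerm_apply, rightInvSeq, count_cons, if_congr (h _) rfl rfl,
      Prod.mk.injEq]
    constructor
    · simp [mul_assoc]
    · split_ifs <;> simp_all [pow_succ]

lemma neg_one_pow_count_rightInvSeq_congr {ω ω' : List B} (h : π ω = π ω') (t : W) :
    (-1 : ℤˣ) ^ (cs.rightInvSeq ω).count t = (-1) ^ (cs.rightInvSeq ω').count t := by
  simpa [signRepresentation_wordProd] using
    congrArg (fun g => (cs.signRepresentation g (t, 1)).2) h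

end SignRepresentation

theorem simple_mem_rightInvSeq_of_isRightDescent {ω : List B} {i : B}
    (hi : cs.IsRightDescent (π ω) i) : s i ∈ cs.rightInvSeq ω := by
  classical
  obtain ⟨ω', hω', hprod⟩ := cs.exists_isReduced (π ω * s i)
  have hnotMem : s i ∉ cs.rightInvSeq ω' := fun hmem => by
    have := (cs.isRightInversion_of_mem_rightInvSeq hω' hmem).2
    rw [← hprod, simple_mul_simple_cancel_right] at this
    exact lt_asymm hi this
  have hcount : (cs.rightInvSeq (ω'.concat i)).count (s i) = 1 := by
    have : s i ∉ (cs.rightInvSeq ω').map (MulAut.conj (s i)) := by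
      simpa [MulAut.conj_apply, inv_simple, mul_assoc, mul_eq_one_iff_eq_inv] using hnotMem
    rw [rightInvSeq_concat, concat_eq_append, count_append, count_eq_zero_of_not_mem this]
    simp
  have := cs.neg_one_pow_count_rightInvSeq_congr (ω := ω) (ω' := ω'.concat i)
    (by rw [wordProd_concat, ← hprod, simple_mul_simple_cancel_right]) (s i)
  rw [hcount, pow_one] at this
  refine count_pos_iff.1 (Nat.pos_of_ne_zero fun h0 => ?_)
  rw [h0, pow_zero] at this
  exact absurd this (by decide)

theorem exists_wordProd_mul_simple_eq_eraseIdx {ω : List B} {i : B}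
    (hi : cs.IsRightDescent (π ω) i) : ∃ k < ω.length, π ω * s i = π (ω.eraseIdx k) := by
  obtain ⟨k, hk, hget⟩ := getElem_of_mem (cs.simple_mem_rightInvSeq_of_isRightDescent hi)
  rw [length_rightInvSeq] at hk
  refine ⟨k, hk, ?_⟩
  rw [← hget, ← getD_eq_getElem _ 1, wordProd_mul_getD_rightInvSeq]

theorem exists_sublist_length_lt_of_not_isReduced {ω : List B} (hω : ¬cs.IsReduced ω) :
    ∃ ω', ω' <+ ω ∧ ω'.length < ω.length ∧ π ω' = π ω := by
  induction ω using List.reverseRecOn with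
  | nil => exact absurd (by simp [IsReduced]) hω
  | append_singleton ω i ih =>
    by_cases hred : cs.IsReduced ω
    · have hi : cs.IsRightDescent (π ω) i := by
        rcases cs.length_mul_simple (π ω) i with h | h
        · refine absurd ?_ hω
          rw [IsReduced, wordProd_append, wordProd_singleton, h, hred, length_append,
            length_singleton]
        · rw [IsRightDescent]
          omega
      obtain ⟨k, hk, hprod⟩ := cs.exists_wordProd_mul_simple_eq_eraseIdx hi
      refine ⟨ω.eraseIdx k, (eraseIdx_sublist ω k).trans (sublist_append_left ω [i]), ?_, ?_⟩
      · simp [length_eraseIdx_of_lt hk]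
      · rw [← hprod, wordProd_append, wordProd_singleton]
    · obtain ⟨ω', hsub, hlen, hprod⟩ := ih hred
      refine ⟨ω' ++ [i], hsub.append_right [i], by simpa using hlen, ?_⟩
      rw [wordProd_append, wordProd_append, hprod]

theorem exists_isReduced_sublist (ω : List B) :
    ∃ ω', ω' <+ ω ∧ cs.IsReduced ω' ∧ π ω' = π ω := by
  by_cases hω : cs.IsReduced ω
  · exact ⟨ω, Sublist.refl ω, hω, rfl⟩
  obtain ⟨ω₁, hsub₁, hlen, hprod₁⟩ := cs.exists_sublist_length_lt_of_not_isReduced hω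
  obtain ⟨ω₂, hsub₂, hred, hprod₂⟩ := exists_isReduced_sublist ω₁
  exact ⟨ω₂, hsub₂.trans hsub₁, hred, hprod₂.trans hprod₁⟩
termination_by ω.length

def parabolicSubgroup (I : Set B) : Subgroup W :=
  Subgroup.closure (cs.simple '' I)

theorem wordProd_mem_parabolicSubgroup {I : Set B} {ω : List B} (hω : ∀ i ∈ ω, i ∈ I) :
    π ω ∈ cs.parabolicSubgroup I := by
  rw [wordProd, parabolicSubgroup]
  exact Subgroup.list_prod_mem _ <| by
    simpa using fun i hi => Subgroup.subset_closure (Set.mem_image_of_mem _ (hω i hi))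

theorem exists_isReduced_of_mem_parabolicSubgroup {I : Set B} {w : W}
    (hw : w ∈ cs.parabolicSubgroup I) :
    ∃ ω, cs.IsReduced ω ∧ (∀ i ∈ ω, i ∈ I) ∧ π ω = w := by
  obtain ⟨ω, hωI, rfl⟩ : ∃ ω : List B, (∀ i ∈ ω, i ∈ I) ∧ π ω = w := by
    induction hw using Subgroup.closure_induction with
    | mem _ h =>
      obtain ⟨i, hi, rfl⟩ := h
      exact ⟨[i], by simpa, cs.wordProd_singleton i⟩
    | one => exact ⟨[], by simp, cs.wordProd_nil⟩
    | mul _ _ _ _ ih ih' =>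
      obtain ⟨ω, hω, rfl⟩ := ih
      obtain ⟨ω', hω', rfl⟩ := ih'
      exact ⟨ω ++ ω', fun i hi => (mem_append.1 hi).elim (hω i) (hω' i), cs.wordProd_append ω ω'⟩
    | inv _ _ ih =>
      obtain ⟨ω, hω, rfl⟩ := ih
      exact ⟨ω.reverse, by simpa, cs.wordProd_reverse ω⟩
  obtain ⟨ω', hsub, hred, hprod⟩ := cs.exists_isReduced_sublist ω
  exact ⟨ω', hred, fun i hi => hωI i (hsub.subset hi), hprod⟩

theorem length_mul_eq_add_of_forall_length_le_length_mul {I : Set B} {y : W}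
    (hy : ∀ d ∈ cs.parabolicSubgroup I, ℓ y ≤ ℓ (d * y)) {a : W}
    (ha : a ∈ cs.parabolicSubgroup I) : ℓ (a * y) = ℓ a + ℓ y := by
  obtain ⟨κ, hκ, hκI, rfl⟩ := cs.exists_isReduced_of_mem_parabolicSubgroup ha
  obtain ⟨ω, hω, rfl⟩ := cs.exists_isReduced y
  suffices cs.IsReduced (κ ++ ω) by
    rw [← wordProd_append, this, hκ, hω, length_append]
  by_contra h
  obtain ⟨ν, hsub, hlen, hprod⟩ := cs.exists_sublist_length_lt_of_not_isReduced h
  obtain ⟨κ', ω', rfl, hκ', hω'⟩ := sublist_append_iff.1 hsub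
  rw [wordProd_append, wordProd_append] at hprod
  have hd : (π κ')⁻¹ * π κ ∈ cs.parabolicSubgroup I :=
    mul_mem (inv_mem (cs.wordProd_mem_parabolicSubgroup fun i hi => hκI i (hκ'.subset hi)))
      (cs.wordProd_mem_parabolicSubgroup hκI)
  have hle := hy _ hd
  rw [mul_assoc, ← hprod, inv_mul_cancel_left, hω] at hle
  obtain rfl : ω' = ω :=
    hω'.eq_of_length (le_antisymm hω'.length_le (hle.trans (cs.length_wordProd_le ω')))
  have := cs.length_wordProd_le κ'
  rw [mul_right_cancel hprod, hκ] at this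
  simp only [length_append] at hlen
  omega

theorem exists_simple_eq_conj_of_forall_length_le_length_mul {I : Set B} {y : W}
    (hy : ∀ d ∈ cs.parabolicSubgroup I, ℓ y ≤ ℓ (d * y)) {k : B}
    (hk : ℓ y < ℓ (y * s k)) (hmem : y * s k * y⁻¹ ∈ cs.parabolicSubgroup I) :
    ∃ i ∈ I, y * s k * y⁻¹ = s i := by
  have hlen := cs.length_mul_eq_add_of_forall_length_le_length_mul hy hmem
  rw [inv_mul_cancel_right] at hlen
  obtain ⟨κ, hκ, hκI, hprod⟩ := cs.exists_isReduced_of_mem_parabolicSubgroup hmem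
  obtain ⟨i, rfl⟩ : ∃ i, κ = [i] := by
    rw [← List.length_eq_one_iff, ← hκ, hprod]
    rcases cs.length_mul_simple y k with h | h <;> omega
  exact ⟨i, hκI i (mem_singleton_self i), by rw [← hprod, wordProd_singleton]⟩

theorem exists_forall_conj_simple_eq_simple {I J : Set B} {y₀ : W}
    (hy₀ : ∀ k ∈ J, y₀ * s k * y₀⁻¹ ∈ cs.parabolicSubgroup I) :
    ∃ y : W, ∀ k ∈ J, ∃ i ∈ I, y * s k * y⁻¹ = s i := by
  set D := cs.parabolicSubgroup I
  obtain ⟨y, hy, hmin⟩ := (InvImage.wf cs.length wellFounded_lt).has_min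
    {y | ∀ k ∈ J, y * s k * y⁻¹ ∈ D} ⟨y₀, hy₀⟩
  simp only [Set.mem_ofPred_eq, InvImage, not_lt] at hy hmin
  refine ⟨y, fun k hk => cs.exists_simple_eq_conj_of_forall_length_le_length_mul
    (fun d hd => hmin _ fun l hl => ?_) ?_ (hy k hk)⟩
  · simpa [mul_assoc] using D.mul_mem (D.mul_mem hd (hy l hl)) (D.inv_mem hd)
  · refine lt_of_le_of_ne (hmin _ fun l hl => ?_) (cs.length_mul_simple_ne y k).symm
    have := D.mul_mem (D.mul_mem (hy k hk) (hy l hl)) (D.inv_mem (hy k hk))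
    simpa [mul_assoc] using this

end CoxeterSystem

theorem order_eq_of_mem_conj_dihedral_general {B W : Type*} [Group W] {M : CoxeterMatrix B}
    (cs : CoxeterSystem M W) (i j : B)
    (u v : W)
    (huv : ∃ (x : W) (i' j' : B), i' ≠ j' ∧ M.M i' j' ≠ 0 ∧
        u = x * cs.simple i' * x⁻¹ ∧ v = x * cs.simple j' * x⁻¹)
    (q : W)
    (hu : q⁻¹ * u * q ∈ Subgroup.closure {cs.simple i, cs.simple j})
    (hv : q⁻¹ * v * q ∈ Subgroup.closure {cs.simple i, cs.simple j}) :
    orderOf (u * v) = M.M i j := by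
  obtain ⟨x, i', j', hij', -, rfl, rfl⟩ := huv
  have hconj : ∀ k ∈ ({i', j'} : Set B),
      q⁻¹ * x * cs.simple k * (q⁻¹ * x)⁻¹ ∈ cs.parabolicSubgroup {i, j} := by
    rw [CoxeterSystem.parabolicSubgroup, Set.image_pair]
    rintro k (rfl | rfl)
    · simpa [mul_assoc] using hu
    · simpa [mul_assoc] using hv
  obtain ⟨y, hy⟩ := cs.exists_forall_conj_simple_eq_simple hconj
  obtain ⟨l, hl, hyl⟩ := hy i' (by simp)
  obtain ⟨l', hl', hyl'⟩ := hy j' (by simp)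
  have horder (g : W) :
      orderOf (g * cs.simple i' * g⁻¹ * (g * cs.simple j' * g⁻¹)) = M i' j' := by
    rw [← cs.orderOf_simple_mul_simple,
      ← (MulAut.conj g).orderOf_eq (cs.simple i' * cs.simple j'), MulAut.conj_apply]
    group
  have hll' : M l l' = M i' j' := by
    rw [← horder y, hyl, hyl', cs.orderOf_simple_mul_simple]
  have hne : l ≠ l' := by
    rintro rfl
    exact M.off_diagonal i' j' hij' (hll'.symm.trans (M.diagonal l))
  rw [horder, ← hll']
  rcases hl with rfl | rfl <;> rcases hl' with rfl | rfl
  · exact absurd rfl hne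
  · rfl
  · exact M.symmetric _ _
  · exact absurd rfl hne

/-- Let `s = s_i`, `t = s_j` be distinct simple reflections with
`m_{s,t} = M i j` finite, let `(u, v)` belong to `𝔑` (i.e. `(u,v)` is componentwise
conjugate, by a single element, to a pair of distinct simple reflections with finite
Coxeter matrix entry), and let `q ∈ W`. If `u, v ∈ q D_{s,t} q⁻¹`, where `D_{s,t}` is
the subgroup generated by `s` and `t`, then the order of `uv` equals `M i j`. -/
theorem order_eq_of_mem_conj_dihedral {B W : Type*} [Group W] {M : CoxeterMatrix B}
    (cs : CoxeterSystem M W) (i j : B) (hij : i ≠ j) (hfin : M.M i j ≠ 0)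
    (u v : W)
    (huv : ∃ (x : W) (i' j' : B), i' ≠ j' ∧ M.M i' j' ≠ 0 ∧
        u = x * cs.simple i' * x⁻¹ ∧ v = x * cs.simple j' * x⁻¹)
    (q : W)
    (hu : q⁻¹ * u * q ∈ Subgroup.closure {cs.simple i, cs.simple j})
    (hv : q⁻¹ * v * q ∈ Subgroup.closure {cs.simple i, cs.simple j}) :
    orderOf (u * v) = M.M i j :=
  order_eq_of_mem_conj_dihedral_general cs i j u v huv q hu hv
end
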